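/- Under the same stationarity assumption, with E[1^a, 0^m] = ∫ z^a (1-z)^m dπ, one has for every n ≥ 0: ((n+2)(n+1+2B+2S) - 2S)·E[1, 0^{n+1}] = (n+1)(n+2Bb₀)·E[1, 0^n] + 2Bb₁·E[0^{n+1}] + (n+2)·2S·E[1, 0^{n+2}]. -/

import Mathlib

/-!
Apply stationarity to `f z = z * (1 - z) ^ (n + 1)`. Since `(1 - z) * d/dz` sends `(1 - z) ^ k` to
`-k * (1 - z) ^ k`, the generator maps `f` into the span of the moment functions `z * (1 - z) ^ k`
and `(1 - z) ^ k`; integrating against `μ`, where all of them are integrable because `μ` lives on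
`[0, 1]`, gives a linear relation between the moments, which is the claimed recursion.
-/

open MeasureTheory Real

theorem Continuous.integrable_of_measure_compl_eq_zero {X E : Type*} [TopologicalSpace X]
    [T2Space X] [MeasurableSpace X] [OpensMeasurableSpace X] [NormedAddCommGroup E]
    {μ : Measure X} [IsFiniteMeasureOnCompacts μ] {f : X → E} {K : Set X}
    (hf : Continuous f) (hK : IsCompact K) (hμK : μ Kᶜ = 0) : Integrable f μ := by
  rw [← Measure.restrict_eq_self_of_ae_mem (ae_iff.mpr hμK)]
  exact hf.continuousOn.integrableOn_compact hK

theorem hasDerivAt_one_sub_pow (k : ℕ) (z : ℝ) :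
    HasDerivAt (fun z : ℝ => (1 - z) ^ k) (-(k * (1 - z) ^ (k - 1))) z := by
  simpa using ((hasDerivAt_id' z).const_sub 1).fun_pow k

-- Multiplying by `1 - z` absorbs the truncated exponent `k - 1` of the derivative.
theorem one_sub_mul_deriv_one_sub_pow (k : ℕ) (z : ℝ) :
    (1 - z) * deriv (fun z : ℝ => (1 - z) ^ k) z = -(k * (1 - z) ^ k) := by
  rw [(hasDerivAt_one_sub_pow k z).deriv]
  cases k with
  | zero => simp
  | succ k => push_cast; ring

theorem deriv_mul_one_sub_pow_succ (m : ℕ) :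
    deriv (fun z : ℝ => z * (1 - z) ^ (m + 1))
      = fun z => ((m : ℝ) + 2) * (1 - z) ^ (m + 1) - ((m : ℝ) + 1) * (1 - z) ^ m := by
  funext z
  have h := (hasDerivAt_id' z).fun_mul (hasDerivAt_one_sub_pow (m + 1) z)
  rw [h.deriv]
  push_cast
  ring

theorem one_sub_mul_deriv_deriv_mul_one_sub_pow_succ (m : ℕ) (z : ℝ) :
    (1 - z) * deriv (deriv fun z : ℝ => z * (1 - z) ^ (m + 1)) z
      = ((m : ℝ) + 1) * (m * (1 - z) ^ m - ((m : ℝ) + 2) * (1 - z) ^ (m + 1)) := by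
  have hd : ∀ k : ℕ, DifferentiableAt ℝ (fun z : ℝ => (1 - z) ^ k) z :=
    fun k => (hasDerivAt_one_sub_pow k z).differentiableAt
  rw [deriv_mul_one_sub_pow_succ, deriv_fun_sub ((hd _).const_mul _) ((hd _).const_mul _),
    deriv_const_mul _ (hd _), deriv_const_mul _ (hd _), mul_sub, mul_left_comm,
    one_sub_mul_deriv_one_sub_pow, mul_left_comm, one_sub_mul_deriv_one_sub_pow]
  push_cast
  ring

noncomputable def wfGenerator (B b₀ b₁ S : ℝ) (f : ℝ → ℝ) (z : ℝ) : ℝ :=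
  (B * b₁ * (1 - z) - B * b₀ * z + S * z * (1 - z)) * deriv f z
    + 1 / 2 * (z * (1 - z)) * deriv (deriv f) z

theorem two_mul_wfGenerator_mul_one_sub_pow_succ {B b₀ b₁ : ℝ} (S : ℝ) (hsum : b₀ + b₁ = 1)
    (n : ℕ) (z : ℝ) :
    2 * wfGenerator B b₀ b₁ S (fun z => z * (1 - z) ^ (n + 1)) z
      = ((n : ℝ) + 1) * ((n : ℝ) + 2 * B * b₀) * (z * (1 - z) ^ n)
        - (((n : ℝ) + 2) * ((n : ℝ) + 1 + 2 * B + 2 * S) - 2 * S) * (z * (1 - z) ^ (n + 1))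
        + 2 * B * b₁ * (1 - z) ^ (n + 1)
        + ((n : ℝ) + 2) * (2 * S) * (z * (1 - z) ^ (n + 2)) := by
  have h₂ := one_sub_mul_deriv_deriv_mul_one_sub_pow_succ n z
  rw [wfGenerator, mul_assoc (1 / 2 : ℝ), mul_assoc z, h₂, deriv_mul_one_sub_pow_succ]
  linear_combination (-2 * B * ((n : ℝ) + 2) * (z * (1 - z) ^ (n + 1))) * hsum

theorem WF_moment_recursion_two_general (B b₀ b₁ S : ℝ) (hsum : b₀ + b₁ = 1)
    (μ : Measure ℝ) [IsProbabilityMeasure μ] (hsupp : μ (Set.Icc (0 : ℝ) 1)ᶜ = 0)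
    (hstat : ∀ f : ℝ → ℝ, ContDiff ℝ 2 f →
      ∫ z, ((B * b₁ * (1 - z) - B * b₀ * z + S * z * (1 - z)) * deriv f z
          + 1 / 2 * (z * (1 - z)) * deriv (deriv f) z) ∂μ = 0)
    (n : ℕ) :
    (((n : ℝ) + 2) * ((n : ℝ) + 1 + 2 * B + 2 * S) - 2 * S) *
        ∫ z, z * (1 - z) ^ (n + 1) ∂μ
      = ((n : ℝ) + 1) * ((n : ℝ) + 2 * B * b₀) * ∫ z, z * (1 - z) ^ n ∂μ
        + 2 * B * b₁ * ∫ z, (1 - z) ^ (n + 1) ∂μ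
        + ((n : ℝ) + 2) * (2 * S) * ∫ z, z * (1 - z) ^ (n + 2) ∂μ := by
  have hint : ∀ g : ℝ → ℝ, Continuous g → Integrable g μ :=
    fun g hg => hg.integrable_of_measure_compl_eq_zero isCompact_Icc hsupp
  have hgen : ∫ z, 2 * wfGenerator B b₀ b₁ S (fun z => z * (1 - z) ^ (n + 1)) z ∂μ = 0 := by
    rw [integral_const_mul]
    exact mul_eq_zero_of_right 2 (hstat (fun z => z * (1 - z) ^ (n + 1)) (by fun_prop))
  simp only [two_mul_wfGenerator_mul_one_sub_pow_succ S hsum] at hgen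
  rw [integral_add, integral_add, integral_sub, integral_const_mul, integral_const_mul,
    integral_const_mul, integral_const_mul] at hgen
  · linarith
  all_goals exact hint _ (by fun_prop)

/-- Mixed moment recursion for a stationary distribution of the Wright-Fisher
diffusion: `((n+2)(n+1+2B+2S) - 2S)·E[1,0^{n+1}] = (n+1)(n+2Bb₀)·E[1,0^n]
+ 2Bb₁·E[0^{n+1}] + (n+2)·2S·E[1,0^{n+2}]`. -/
theorem WF_moment_recursion_two (B b₀ b₁ S : ℝ) (hB : 0 ≤ B) (hS : 0 ≤ S)
    (hb₀ : 0 ≤ b₀) (hb₁ : 0 ≤ b₁) (hsum : b₀ + b₁ = 1)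
    (μ : Measure ℝ) [IsProbabilityMeasure μ] (hsupp : μ (Set.Icc (0 : ℝ) 1)ᶜ = 0)
    (hstat : ∀ f : ℝ → ℝ, ContDiff ℝ 2 f →
      ∫ z, ((B * b₁ * (1 - z) - B * b₀ * z + S * z * (1 - z)) * deriv f z
          + 1 / 2 * (z * (1 - z)) * deriv (deriv f) z) ∂μ = 0)
    (n : ℕ) :
    (((n : ℝ) + 2) * ((n : ℝ) + 1 + 2 * B + 2 * S) - 2 * S) *
        ∫ z, z * (1 - z) ^ (n + 1) ∂μ
      = ((n : ℝ) + 1) * ((n : ℝ) + 2 * B * b₀) * ∫ z, z * (1 - z) ^ n ∂μ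
        + 2 * B * b₁ * ∫ z, (1 - z) ^ (n + 1) ∂μ
        + ((n : ℝ) + 2) * (2 * S) * ∫ z, z * (1 - z) ^ (n + 2) ∂μ :=
  WF_moment_recursion_two_general B b₀ b₁ S hsum μ hsupp hstat n
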